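/- Let A ∈ P_k. If no linear form of the family E_1 vanishes at A (i.e. any two elementary circuits of G(A) that are distinct as directed graphs have distinct average weights), then the critical graph G^c(A) is an elementary circuit; in particular G^c(A) is strongly connected, and the critical graph of the associated reduced matrix Ā is strongly connected. -/

import Mathlib

open scoped BigOperators
open MeasureTheory

noncomputable section

/-- The max-plus semiring carrier `ℝ_max = ℝ ∪ {-∞}`, where `⊕ = max` (the lattice `sup`)
and `⊗ = +` (the additive structure of `WithBot ℝ`, for which `⊥` is absorbing). -/
abbrev Rmax : Type := WithBot ℝ

/-- The order topology on `ℝ_max`; it coincides with the topology of the metric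
`d(x,y) = |arctan x - arctan y|` (with `arctan (-∞) = -π/2`). -/
instance : TopologicalSpace Rmax := Preorder.topology Rmax

instance : MeasurableSpace Rmax := borel Rmax

/-- `k × k` matrices with entries in `ℝ_max`. -/
abbrev MPMat (k : ℕ) : Type := Fin k → Fin k → Rmax

namespace MaxPlus

variable {k : ℕ}

/-- Max-plus matrix product: `(A ⊗ B) i j = max_l (A i l + B l j)`. -/
def mpMul (A B : MPMat k) : MPMat k :=
  fun i j => Finset.univ.sup fun l => A i l + B l j

/-- The max-plus identity matrix. -/
def mpId (k : ℕ) : MPMat k := fun i j => if i = j then (0 : Rmax) else ⊥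

/-- Max-plus power `A^{⊗n}` (with the convention `A^{⊗0} = Id`). -/
def mpPow (A : MPMat k) : ℕ → MPMat k
  | 0 => mpId k
  | n + 1 => mpMul (mpPow A n) A

/-- Max-plus product of a list of matrices (in the order of the list). -/
def mpListProd : List (MPMat k) → MPMat k
  | [] => mpId k
  | A :: L => mpMul A (mpListProd L)

/-- The backward product `X N ⊗ ⋯ ⊗ X 1`. -/
def mpProd (X : ℕ → MPMat k) : ℕ → MPMat k
  | 0 => mpId k
  | n + 1 => mpMul (X (n + 1)) (mpProd X n)

/-- `A` has max-plus rank one: `A i j = a i + b j` for vectors `a`, `b`,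
neither identically `-∞`. -/
def IsRankOne (A : MPMat k) : Prop :=
  ∃ a b : Fin k → Rmax, (∃ i, a i ≠ ⊥) ∧ (∃ j, b j ≠ ⊥) ∧ ∀ i j, A i j = a i + b j

/-- `A ∈ M_k`: no row of `-∞`. -/
def MemMk (A : MPMat k) : Prop := ∀ i, ∃ j, A i j ≠ ⊥

/-- `A ∈ P_k` (primitive): some max-plus power of `A` has all entries finite. -/
def MemPk (A : MPMat k) : Prop :=
  MemMk A ∧ ∃ n : ℕ, 0 < n ∧ ∀ i j, mpPow A n i j ≠ ⊥

/-- Weight of the path `(p 0, p 1, …, p n)` with respect to `A`. -/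
def pathWeight (A : MPMat k) (n : ℕ) (p : ℕ → Fin k) : Rmax :=
  ∑ l ∈ Finset.range n, A (p l) (p (l + 1))

/-- Average weight of a circuit of length `n`. -/
def circAw (A : MPMat k) (n : ℕ) (p : ℕ → Fin k) : Rmax :=
  (pathWeight A n p).map fun x => x / (n : ℝ)

/-- Max-plus spectral radius: the maximum of the average weights of the circuits of
length at most `k` (equivalently, of the elementary circuits) of `G(A)`. -/
def mpRho (A : MPMat k) : Rmax :=
  Finset.univ.sup fun c : Σ n : Fin k, Fin (n.1 + 1) → Fin k =>
    circAw A (c.1.1 + 1) fun l => c.2 ⟨l % (c.1.1 + 1), Nat.mod_lt _ (Nat.succ_pos _)⟩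

/-- The arc `(i,j)` belongs to the critical graph `G^c(A)`: it lies on a circuit of
`G(A)` whose average weight is `ρ_max(A)`. -/
def IsCritArc (A : MPMat k) (i j : Fin k) : Prop :=
  ∃ (n : ℕ) (p : ℕ → Fin k), 0 < n ∧ p n = p 0 ∧
    pathWeight A n p ≠ ⊥ ∧ circAw A n p = mpRho A ∧
    ∃ l < n, p l = i ∧ p (l + 1) = j

/-- The node `i` belongs to the critical graph `G^c(A)`. -/
def IsCritNode (A : MPMat k) (i : Fin k) : Prop := ∃ j, IsCritArc A i j

/-- `j` can be reached from `i` by a path in the critical graph. -/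
def CritConnected (A : MPMat k) (i j : Fin k) : Prop :=
  ∃ (n : ℕ) (p : ℕ → Fin k), p 0 = i ∧ p n = j ∧
    ∀ l < n, IsCritArc A (p l) (p (l + 1))

/-- The critical graph `G^c(A)` is nonempty and has exactly one strongly connected
component. -/
def CritSCS1 (A : MPMat k) : Prop :=
  (∃ i, IsCritNode A i) ∧ ∀ i j, IsCritNode A i → IsCritNode A j → CritConnected A i j

/-- The critical graph contains a circuit of length `n`. -/
def HasCritCircuitLen (A : MPMat k) (n : ℕ) : Prop :=
  0 < n ∧ ∃ p : ℕ → Fin k, p n = p 0 ∧ ∀ l < n, IsCritArc A (p l) (p (l + 1))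

/-- The cyclicity of the critical graph is `1`: the gcd of the lengths of its circuits
is `1` (equivalently, finitely many of these lengths have gcd `1`). -/
def CritCyc1 (A : MPMat k) : Prop :=
  ∃ S : Finset ℕ, S.Nonempty ∧ (∀ m ∈ S, HasCritCircuitLen A m) ∧ S.gcd id = 1

/-- `A` is of type scs1-cyc1. -/
def IsScs1Cyc1 (A : MPMat k) : Prop := CritSCS1 A ∧ CritCyc1 A

/-- The cyclicity `c(A)` of the critical graph: the gcd of the lengths of its circuits. -/
def critCyclicity (A : MPMat k) : ℕ :=
  sInf {d : ℕ | 0 < d ∧ (∀ n, HasCritCircuitLen A n → d ∣ n) ∧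
    ∀ e : ℕ, (∀ n, HasCritCircuitLen A n → e ∣ n) → e ∣ d}

/-- A real matrix, seen as a matrix with entries in `ℝ_max`. -/
def toMP (A : Fin k → Fin k → ℝ) : MPMat k := fun i j => (A i j : Rmax)

open Classical in
/-- Value at `V` of the linear form on `ℝ_max^{k×k}` with (real) coefficients `α`:
the usual linear combination of the entries with nonzero coefficients if these are all
finite, and `-∞` otherwise. -/
def evalForm (α : Fin k → Fin k → ℝ) (V : MPMat k) : Rmax :=
  if ∀ i j, α i j ≠ 0 → V i j ≠ ⊥ then
    (((∑ i, ∑ j, if α i j = 0 then (0 : ℝ) else α i j * WithBot.unbotD 0 (V i j)) : ℝ) : Rmax)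
  else ⊥

open Classical in
/-- Value at `(V, W)` of the linear form on `ℝ_max^{k×k} × ℝ_max^{k×k}` with
coefficients `(α, β)`. -/
def evalForm2 (α β : Fin k → Fin k → ℝ) (V W : MPMat k) : Rmax :=
  if (∀ i j, α i j ≠ 0 → V i j ≠ ⊥) ∧ (∀ i j, β i j ≠ 0 → W i j ≠ ⊥) then
    ((((∑ i, ∑ j, if α i j = 0 then (0 : ℝ) else α i j * WithBot.unbotD 0 (V i j)) +
        (∑ i, ∑ j, if β i j = 0 then (0 : ℝ) else β i j * WithBot.unbotD 0 (W i j))) : ℝ) : Rmax)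
  else ⊥

open Classical in
/-- Coefficient matrix of the linear form `w(·, pth)` (weight of the path
`(p 0, …, p n)`): the coefficient of the entry `(i,j)` is the number of times the path
uses the arc `(i,j)`. -/
def pathCoeff (n : ℕ) (p : ℕ → Fin k) : Fin k → Fin k → ℝ := fun i j =>
  (((Finset.range n).filter fun l => p l = i ∧ p (l + 1) = j).card : ℝ)

/-- Coefficient matrix of the linear form `aw(·, c)` (average weight of the circuit
`(p 0, …, p n = p 0)`). -/
def circCoeff (n : ℕ) (p : ℕ → Fin k) : Fin k → Fin k → ℝ := fun i j =>
  pathCoeff n p i j / (n : ℝ)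

/-- `(p 0, …, p n)` is an elementary path. -/
def IsElemPath (n : ℕ) (p : ℕ → Fin k) : Prop :=
  ∀ l m, l ≤ n → m ≤ n → p l = p m → l = m

/-- `(p 0, …, p n = p 0)` is an elementary circuit. -/
def IsElemCircuit (n : ℕ) (p : ℕ → Fin k) : Prop :=
  0 < n ∧ p n = p 0 ∧ ∀ l m, l < n → m < n → p l = p m → l = m

/-- The set of arcs of a circuit, i.e. the circuit seen as a directed graph. -/
def circArcSet (n : ℕ) (p : ℕ → Fin k) : Set (Fin k × Fin k) :=
  {a | ∃ l < n, p l = a.1 ∧ p (l + 1) = a.2}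

/-- No linear form of the family `E₁` vanishes at `A`. -/
def NoE1Vanishes (A : MPMat k) : Prop :=
  ∀ (n₁ n₂ : ℕ) (p₁ p₂ : ℕ → Fin k), IsElemCircuit n₁ p₁ → IsElemCircuit n₂ p₂ →
    circArcSet n₁ p₁ ≠ circArcSet n₂ p₂ →
    evalForm (fun i j => circCoeff n₁ p₁ i j - circCoeff n₂ p₂ i j) A ≠ 0

/-- No linear form of the family `E₂` vanishes at `A`. -/
def NoE2Vanishes (A : MPMat k) : Prop :=
  ∀ (i κ : Fin k) (n₁ n₂ nc : ℕ) (p₁ p₂ pc : ℕ → Fin k),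
    i ≠ κ → IsElemPath n₁ p₁ → IsElemPath n₂ p₂ →
    p₁ 0 = i → p₂ 0 = i → p₁ n₁ = κ → p₂ n₂ = κ →
    IsElemCircuit nc pc → (∃ l < nc, pc l = κ) →
    ¬(n₁ = n₂ ∧ ∀ l ≤ n₁, p₁ l = p₂ l) →
    evalForm (fun a b => pathCoeff n₁ p₁ a b - (n₁ : ℝ) * circCoeff nc pc a b
      - pathCoeff n₂ p₂ a b + (n₂ : ℝ) * circCoeff nc pc a b) A ≠ 0

open Classical in
/-- No linear form of the family `E₃` vanishes at `(A, B)`. -/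
def NoE3Vanishes (A B : MPMat k) : Prop :=
  ∀ (i₁ i₂ j₁ j₂ m₁ m₂ κ : Fin k) (nc n₁ n₂ q₁ q₂ r₁ r₂ : ℕ)
    (pc pi₁ pi₂ pm₁ pm₂ pj₁ pj₂ : ℕ → Fin k),
    m₁ ≠ m₂ →
    IsElemCircuit nc pc → (∃ l < nc, pc l = κ) →
    IsElemPath n₁ pi₁ → pi₁ 0 = i₁ → pi₁ n₁ = κ →
    IsElemPath n₂ pi₂ → pi₂ 0 = i₂ → pi₂ n₂ = κ →
    IsElemPath q₁ pm₁ → pm₁ 0 = m₁ → pm₁ q₁ = κ →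
    IsElemPath q₂ pm₂ → pm₂ 0 = m₂ → pm₂ q₂ = κ →
    pj₁ 0 = i₁ → pj₁ r₁ = j₁ → r₁ ≤ 2 * k * nc →
    pj₂ 0 = i₂ → pj₂ r₂ = j₂ → r₂ ≤ 2 * k * nc →
    evalForm2
      (fun a b => pathCoeff r₁ pj₁ a b - pathCoeff n₁ pi₁ a b + pathCoeff q₁ pm₁ a b
        - pathCoeff r₂ pj₂ a b + pathCoeff n₂ pi₂ a b - pathCoeff q₂ pm₂ a b
        - ((r₁ : ℝ) - (n₁ : ℝ) + (q₁ : ℝ) - (r₂ : ℝ) + (n₂ : ℝ) - (q₂ : ℝ))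
            * circCoeff nc pc a b)
      (fun a b => (if a = j₁ ∧ b = m₁ then (1 : ℝ) else 0)
        - (if a = j₂ ∧ b = m₂ then (1 : ℝ) else 0))
      A B ≠ 0

/-- Negation on `ℝ_max` (fixing `-∞`). -/
def negB : Rmax → Rmax := WithBot.map fun x : ℝ => -x

/-- `Ã`, the matrix `A` normalized by its max-plus spectral radius:
`Ã i j = A i j - ρ_max(A)`. -/
def tildeM (A : MPMat k) : MPMat k := fun i j => A i j + negB (mpRho A)

/-- `B⁺ = ⊕_{n=1}^{k} B^{⊗n}`. -/
def mpPlus (B : MPMat k) : MPMat k :=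
  fun i j => (Finset.Icc 1 k).sup fun n => mpPow B n i j

/-- The index (in `ℕ`) of the smallest node of the critical graph of `A`; this is the
node `κ(A)`, the smallest node of the lexicographically smallest elementary circuit of
`G^c(A)`. -/
def kappaN (A : MPMat k) : ℕ := sInf {m : ℕ | ∃ h : m < k, IsCritNode A ⟨m, h⟩}

/-- The node `κ(A)` (with a default value, used only when `Fin k` would be empty or the
critical graph trivial). -/
def kappa (A : MPMat k) (dflt : Fin k) : Fin k :=
  if h : kappaN A < k then ⟨kappaN A, h⟩ else dflt

/-- The reduced matrix `Ā` associated to `A`: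
`Ā i j = Ã i j - Ã⁺ i κ(A) + Ã⁺ j κ(A)`. -/
def barM (A : MPMat k) : MPMat k := fun i j =>
  tildeM A i j + negB (mpPlus (tildeM A) i (kappa A i)) + mpPlus (tildeM A) j (kappa A i)

/-- The matrix `B̂` associated to `A` and `B`:
`B̂ i j = B i j - Ã⁺ i κ(A) + Ã⁺ j κ(A)`. -/
def hatM (A B : MPMat k) : MPMat k := fun i j =>
  B i j + negB (mpPlus (tildeM A) i (kappa A i)) + mpPlus (tildeM A) j (kappa A i)

/-- `A` is reduced: nonpositive entries, at least one zero in each row. -/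
def IsReduced (A : MPMat k) : Prop :=
  (∀ i j, A i j ≤ 0) ∧ ∀ i, ∃ j, A i j = 0

/-- `A` is strictly reduced: nonpositive entries, exactly one zero in each row. -/
def IsStrictlyReduced (A : MPMat k) : Prop :=
  (∀ i j, A i j ≤ 0) ∧ ∀ i, ∃! j, A i j = 0

/-- The graph `G(A)` is strongly connected. -/
def GStronglyConnected (A : MPMat k) : Prop :=
  ∀ i j : Fin k, ∃ (n : ℕ) (p : ℕ → Fin k), 0 < n ∧ p 0 = i ∧ p n = j ∧
    ∀ l < n, A (p l) (p (l + 1)) ≠ ⊥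

/-- `arctan`, extended by `arctan (-∞) = -π/2`. -/
def arctanB (x : Rmax) : ℝ := WithBot.recBotCoe (-(Real.pi / 2)) Real.arctan x

/-- The distance `d(A,B) = max_{i,j} |arctan (A i j) - arctan (B i j)|` on `M_k`. -/
def mpDist (A B : MPMat k) : ℝ :=
  ⨆ a : Fin k × Fin k, |arctanB (A a.1 a.2) - arctanB (B a.1 a.2)|

/-- `A` belongs to the (topological) support of `μ`, for the distance `mpDist`. -/
def MemSupport (μ : Measure (MPMat k)) (A : MPMat k) : Prop :=
  ∀ ε : ℝ, 0 < ε → 0 < μ {B | mpDist A B < ε}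

/-- `f` belongs to the support of a measure on `N`-tuples of matrices, for the product
distance. -/
def MemSupportVec {N : ℕ} (ν : Measure (Fin N → MPMat k)) (f : Fin N → MPMat k) : Prop :=
  ∀ ε : ℝ, 0 < ε → 0 < ν {g | ∀ t, mpDist (f t) (g t) < ε}

/-- `(X n)_{n}` is a sequence of i.i.d. random matrices on `(Ω, P)`. -/
def IsIID {Ω : Type*} [MeasurableSpace Ω] (P : Measure Ω) (X : ℕ → Ω → MPMat k) : Prop :=
  (∀ n, Measurable (X n)) ∧
    ProbabilityTheory.iIndepFun X P ∧
    ∀ m n, Measure.map (X m) P = Measure.map (X n) P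

/-- `(X n)_{n ≥ 1}` is a stationary sequence of random matrices on `(Ω, P)`. -/
def IsStationary {Ω : Type*} [MeasurableSpace Ω] (P : Measure Ω)
    (X : ℕ → Ω → MPMat k) : Prop :=
  ∀ m N : ℕ,
    Measure.map (fun ω => fun t : Fin N => X (1 + m + t) ω) P
      = Measure.map (fun ω => fun t : Fin N => X (1 + t) ω) P

/-- The sequence `(X n)_{n ≥ 1}` has the memory loss property: for some `N ≥ 1`, the
product `X N ⊗ ⋯ ⊗ X 1` has rank one with positive probability. -/
def HasMLP {Ω : Type*} [MeasurableSpace Ω] (P : Measure Ω)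
    (X : ℕ → Ω → MPMat k) : Prop :=
  ∃ N : ℕ, 0 < N ∧ 0 < P {ω | IsRankOne (mpProd (fun n => X n ω) N)}

end MaxPlus
namespace Stmt14

lemma coe_exists {x : Rmax} (h : x ≠ ⊥) : ∃ w : ℝ, x = (w : Rmax) := by
  rcases x with _ | w
  · exact absurd rfl h
  · exact ⟨w, rfl⟩

lemma coe_unbot'_eq {x : Rmax} (h : x ≠ ⊥) : ((WithBot.unbotD 0 x : ℝ) : Rmax) = x := by
  rcases coe_exists h with ⟨w, rfl⟩
  simp

lemma sum_eq_bot_iff {s : Finset ℕ} {f : ℕ → Rmax} :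
    ∑ i ∈ s, f i = ⊥ ↔ ∃ i ∈ s, f i = ⊥ := by
  classical
  induction s using Finset.induction with
  | empty => simp
  | insert _ _ hx ih =>
      rename_i a s
      simp [Finset.sum_insert hx, WithBot.add_eq_bot, ih]

lemma sum_coe (s : Finset ℕ) (g : ℕ → ℝ) :
    ∑ i ∈ s, ((g i : ℝ) : Rmax) = ((∑ i ∈ s, g i : ℝ) : Rmax) := by
  classical
  induction s using Finset.induction with
  | empty => simp
  | insert _ _ hx ih =>
      rename_i a s
      rw [Finset.sum_insert hx, Finset.sum_insert hx, ih, ← WithBot.coe_add]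

lemma sum_add_coe (s : Finset ℕ) (f : ℕ → Rmax) (g : ℕ → ℝ) :
    ∑ i ∈ s, (f i + ((g i : ℝ) : Rmax)) = (∑ i ∈ s, f i) + ((∑ i ∈ s, g i : ℝ) : Rmax) := by
  classical
  induction s using Finset.induction with
  | empty => simp
  | insert _ _ hx ih =>
      rename_i a s
      rw [Finset.sum_insert hx, Finset.sum_insert hx, ih, Finset.sum_insert hx,
        WithBot.coe_add]
      abel

lemma add_coe_ne_bot {x : Rmax} {e : ℝ} : x + (e : Rmax) = ⊥ ↔ x = ⊥ := by
  rcases eq_or_ne x ⊥ with h | h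
  · simp [h]
  · obtain ⟨w, rfl⟩ := coe_exists h
    rw [← WithBot.coe_add]
    simp

lemma add_coe_cancel {x y : Rmax} {e : ℝ} (h : x + (e : Rmax) = y + (e : Rmax)) : x = y := by
  rcases eq_or_ne x ⊥ with hx | hx
  · rw [hx, WithBot.bot_add] at h
    rw [hx]
    exact (add_coe_ne_bot.mp h.symm).symm
  · rcases eq_or_ne y ⊥ with hy | hy
    · rw [hy, WithBot.bot_add] at h
      exact absurd (add_coe_ne_bot.mp h) hx
    · obtain ⟨w, rfl⟩ := coe_exists hx
      obtain ⟨v, rfl⟩ := coe_exists hy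
      rw [← WithBot.coe_add, ← WithBot.coe_add, WithBot.coe_inj] at h
      exact WithBot.coe_inj.mpr (by linarith)


open MaxPlus Finset

variable {k : ℕ}

/-- All arcs of the path are finite. -/
def ArcsOK (A : MPMat k) (n : ℕ) (p : ℕ → Fin k) : Prop :=
  ∀ l < n, A (p l) (p (l + 1)) ≠ ⊥

/-- The real weight of a path with finite arcs. -/
def pwR (A : MPMat k) (n : ℕ) (p : ℕ → Fin k) : ℝ :=
  ∑ l ∈ range n, WithBot.unbotD 0 (A (p l) (p (l + 1)))

lemma pathWeight_eq_bot_iff {A : MPMat k} {n : ℕ} {p : ℕ → Fin k} :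
    pathWeight A n p = ⊥ ↔ ∃ l, l < n ∧ A (p l) (p (l + 1)) = ⊥ := by
  unfold pathWeight
  rw [sum_eq_bot_iff]
  simp [Finset.mem_range]

lemma arcsOK_of_ne_bot {A : MPMat k} {n : ℕ} {p : ℕ → Fin k}
    (h : pathWeight A n p ≠ ⊥) : ArcsOK A n p := by
  intro l hl hbot
  exact h (pathWeight_eq_bot_iff.mpr ⟨l, hl, hbot⟩)

lemma pathWeight_coe {A : MPMat k} {n : ℕ} {p : ℕ → Fin k} (h : ArcsOK A n p) :
    pathWeight A n p = ((pwR A n p : ℝ) : Rmax) := by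
  unfold pathWeight pwR
  rw [← sum_coe]
  exact Finset.sum_congr rfl fun l hl => (coe_unbot'_eq (h l (Finset.mem_range.mp hl))).symm

lemma circAw_coe {A : MPMat k} {n : ℕ} {p : ℕ → Fin k} (h : ArcsOK A n p) :
    circAw A n p = ((pwR A n p / n : ℝ) : Rmax) := by
  unfold circAw
  rw [pathWeight_coe h, WithBot.map_coe]

lemma pathWeight_le_mpPow (A : MPMat k) : ∀ (n : ℕ) (p : ℕ → Fin k),
    pathWeight A n p ≤ mpPow A n (p 0) (p n) := by
  intro n
  induction n with
  | zero =>
      intro p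
      simp [pathWeight, mpPow, mpId]
  | succ n ih =>
      intro p
      have h1 : mpPow A (n + 1) (p 0) (p (n + 1))
          = univ.sup (fun l => mpPow A n (p 0) l + A l (p (n + 1))) := rfl
      rw [h1]
      calc pathWeight A (n + 1) p
          = pathWeight A n p + A (p n) (p (n + 1)) := Finset.sum_range_succ _ _
        _ ≤ mpPow A n (p 0) (p n) + A (p n) (p (n + 1)) := add_le_add (ih p) le_rfl
        _ ≤ _ := Finset.le_sup (f := fun l => mpPow A n (p 0) l + A l (p (n + 1))) (Finset.mem_univ (p n))

lemma mpPow_path {A : MPMat k} : ∀ {n : ℕ} {i j : Fin k}, mpPow A n i j ≠ ⊥ →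
    ∃ p : ℕ → Fin k, p 0 = i ∧ p n = j ∧ ArcsOK A n p := by
  intro n
  induction n with
  | zero =>
      intro i j h
      have hij : i = j := by
        by_contra hne
        exact h (by simp [mpPow, mpId, hne])
      exact ⟨fun _ => i, rfl, hij.symm ▸ rfl, fun l hl => absurd hl (Nat.not_lt_zero l)⟩
  | succ n ih =>
      intro i j h
      have h1 : mpPow A (n + 1) i j = univ.sup (fun l => mpPow A n i l + A l j) := rfl
      rw [h1] at h
      have h2 : ∃ l, mpPow A n i l + A l j ≠ ⊥ := by
        by_contra hc
        push_neg at hc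
        exact h ((Finset.sup_eq_bot_iff _ _).mpr fun l _ => hc l)
      obtain ⟨l, hl⟩ := h2
      rw [Ne, WithBot.add_eq_bot, not_or] at hl
      obtain ⟨p, hp0, hpn, hpa⟩ := ih hl.1
      refine ⟨fun t => if t ≤ n then p t else j, by simp [hp0], by simp, ?_⟩
      intro t ht
      rcases Nat.lt_or_ge t n with h3 | h3
      · have e1 : (if t ≤ n then p t else j) = p t := if_pos (Nat.le_of_lt h3)
        have e2 : (if t + 1 ≤ n then p (t + 1) else j) = p (t + 1) := if_pos h3
        simp only [e1, e2]
        exact hpa t h3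
      · have ht' : t = n := by omega
        subst ht'
        simpa [hpn] using hl.2

/-- The circuit obtained by cutting out the loop between positions `a` and `a + d`. -/
def cutQ (p : ℕ → Fin k) (a d : ℕ) : ℕ → Fin k := fun t => if t ≤ a then p t else p (t + d)

section Cut

variable {p : ℕ → Fin k} {a b N : ℕ}

lemma cut_q0 : cutQ p a (b - a) 0 = p 0 := if_pos (Nat.zero_le a)

lemma cut_qN (hab : a < b) (hbN : b ≤ N) (hpab : p a = p b) :
    cutQ p a (b - a) (N - (b - a)) = p N := by
  unfold cutQ
  by_cases hc : N - (b - a) ≤ a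
  · have h1 : N - (b - a) = a := by omega
    have h2 : b = N := by omega
    rw [if_pos hc, h1, hpab, h2]
  · rw [if_neg hc]
    congr 1
    omega

lemma cut_arcs (hab : a < b) (hbN : b ≤ N) (hpab : p a = p b) :
    ∀ t < N - (b - a), ∃ s < N, cutQ p a (b - a) t = p s ∧ cutQ p a (b - a) (t + 1) = p (s + 1) := by
  intro t ht
  unfold cutQ
  by_cases h1 : t < a
  · exact ⟨t, by omega, if_pos (by omega), if_pos (by omega)⟩
  · refine ⟨t + (b - a), by omega, ?_, ?_⟩
    · by_cases h2 : t = a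
      · rw [if_pos (by omega), h2, hpab]
        congr 1
        omega
      · rw [if_neg (by omega)]
    · rw [if_neg (by omega)]
      congr 1
      omega

lemma cut_cover (hab : a < b) (hbN : b ≤ N) (hpab : p a = p b) :
    ∀ t < N, (∃ s < b - a, p (a + s) = p t ∧ p (a + s + 1) = p (t + 1)) ∨
      (∃ s < N - (b - a), cutQ p a (b - a) s = p t ∧ cutQ p a (b - a) (s + 1) = p (t + 1)) := by
  intro t ht
  rcases Nat.lt_or_ge t a with h1 | h1
  · right
    refine ⟨t, by omega, ?_, ?_⟩
    · exact if_pos (by omega)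
    · exact if_pos (by omega)
  · rcases Nat.lt_or_ge t b with h2 | h2
    · left
      refine ⟨t - a, by omega, ?_, ?_⟩
      · congr 1; omega
      · congr 1; omega
    · right
      refine ⟨t - (b - a), by omega, ?_, ?_⟩
      · unfold cutQ
        by_cases h3 : t - (b - a) ≤ a
        · have h4 : t = b := by omega
          have h5 : t - (b - a) = a := by omega
          rw [if_pos h3, h5, hpab, h4]
        · rw [if_neg h3]
          congr 1
          omega
      · unfold cutQ
        rw [if_neg (by omega)]
        congr 1
        omega

lemma cut_weight (hab : a < b) (hbN : b ≤ N) (hpab : p a = p b) (M : MPMat k) :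
    pathWeight M N p
      = pathWeight M (b - a) (fun t => p (a + t)) + pathWeight M (N - (b - a)) (cutQ p a (b - a)) := by
  unfold pathWeight
  have e1 : N = b + (N - b) := by omega
  have e2 : b = a + (b - a) := by omega
  have e3 : N - (b - a) = a + (N - b) := by omega
  rw [e3]
  calc ∑ t ∈ range N, M (p t) (p (t + 1))
      = ∑ t ∈ range (b + (N - b)), M (p t) (p (t + 1)) := by rw [← e1]
    _ = ∑ t ∈ range b, M (p t) (p (t + 1)) + ∑ t ∈ range (N - b), M (p (b + t)) (p (b + t + 1)) := by
        rw [Finset.sum_range_add]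
    _ = (∑ t ∈ range a, M (p t) (p (t + 1)) + ∑ t ∈ range (b - a), M (p (a + t)) (p (a + t + 1)))
        + ∑ t ∈ range (N - b), M (p (b + t)) (p (b + t + 1)) := by
        rw [show (range b) = range (a + (b - a)) by rw [← e2], Finset.sum_range_add]
    _ = ∑ t ∈ range (b - a), M (p (a + t)) (p (a + t + 1))
        + (∑ t ∈ range a, M (cutQ p a (b - a) t) (cutQ p a (b - a) (t + 1))
          + ∑ t ∈ range (N - b), M (cutQ p a (b - a) (a + t)) (cutQ p a (b - a) (a + t + 1))) := by
        have c1 : ∑ t ∈ range a, M (cutQ p a (b - a) t) (cutQ p a (b - a) (t + 1))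
            = ∑ t ∈ range a, M (p t) (p (t + 1)) := by
          refine Finset.sum_congr rfl fun t ht => ?_
          have ht' := Finset.mem_range.mp ht
          unfold cutQ
          rw [if_pos (by omega), if_pos (by omega)]
        have c2 : ∑ t ∈ range (N - b), M (cutQ p a (b - a) (a + t)) (cutQ p a (b - a) (a + t + 1))
            = ∑ t ∈ range (N - b), M (p (b + t)) (p (b + t + 1)) := by
          refine Finset.sum_congr rfl fun t ht => ?_
          unfold cutQ
          have d2 : (if a + t + 1 ≤ a then p (a + t + 1) else p (a + t + 1 + (b - a))) = p (b + t + 1) := by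
            rw [if_neg (by omega)]
            congr 1
            omega
          by_cases h0 : t = 0
          · subst h0
            rw [if_pos (by omega), d2]
            simp only [Nat.add_zero]
            rw [hpab]
          · rw [if_neg (by omega), d2]
            congr 2
            omega
        rw [c1, c2]
        abel
    _ = _ := by
        rw [← Finset.sum_range_add (fun t => M (cutQ p a (b - a) t) (cutQ p a (b - a) (t + 1)))]
        rfl

end Cut

lemma shorten : ∀ (N : ℕ) (p : ℕ → Fin k), 0 < N →
    ∃ (N' : ℕ) (q : ℕ → Fin k), 0 < N' ∧ q 0 = p 0 ∧ q N' = p N ∧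
      (∀ t < N', ∃ s < N, q t = p s ∧ q (t + 1) = p (s + 1)) ∧
      (∀ x y, x < N' → y < N' → q x = q y → x = y) := by
  intro N
  induction N using Nat.strong_induction_on with
  | _ N IH =>
    intro p hN
    by_cases hterm : ∀ x y, x ≤ N → y ≤ N → p x = p y → x = y ∨ (x = 0 ∧ y = N) ∨ (x = N ∧ y = 0)
    · refine ⟨N, p, hN, rfl, rfl, fun t ht => ⟨t, ht, rfl, rfl⟩, ?_⟩
      intro x y hx hy hxy
      rcases hterm x y (by omega) (by omega) hxy with h | h | h <;> omega
    · push_neg at hterm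
      obtain ⟨x, y, hx, hy, hxy, hne1, hne2, hne3⟩ := hterm
      have hxyne : x ≠ y := hne1
      -- wlog a < b
      obtain ⟨a, b, hab, hbN, hpab, habe⟩ :
          ∃ a b, a < b ∧ b ≤ N ∧ p a = p b ∧ ¬(a = 0 ∧ b = N) := by
        rcases Nat.lt_or_ge x y with h | h
        · exact ⟨x, y, h, hy, hxy, fun hc => hne2 hc.1 hc.2⟩
        · have h' : y < x := by omega
          exact ⟨y, x, h', hx, hxy.symm, fun hc => hne3 hc.2 hc.1⟩
      have hn2pos : 0 < N - (b - a) := by omega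
      have hn2lt : N - (b - a) < N := by omega
      obtain ⟨N', q, h1, h2, h3, h4, h5⟩ := IH (N - (b - a)) hn2lt (cutQ p a (b - a)) hn2pos
      refine ⟨N', q, h1, ?_, ?_, ?_, h5⟩
      · rw [h2, cut_q0]
      · rw [h3, cut_qN hab hbN hpab]
      · intro t ht
        obtain ⟨s, hs, e1, e2⟩ := h4 t ht
        obtain ⟨s', hs', f1, f2⟩ := cut_arcs hab hbN hpab s hs
        exact ⟨s', hs', e1.trans f1, e2.trans f2⟩

lemma elem_le_k {n : ℕ} {p : ℕ → Fin k}
    (hinj : ∀ x y, x < n → y < n → p x = p y → x = y) : n ≤ k := by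
  have := Finset.card_le_card_of_injOn p (fun x _ => Finset.mem_univ (p x))
    (fun x hx y hy hxy => hinj x y (Finset.mem_range.mp (Finset.mem_coe.mp hx))
      (Finset.mem_range.mp (Finset.mem_coe.mp hy)) hxy) (s := Finset.range n)
  simpa using this

lemma not_elem {N : ℕ} {p : ℕ → Fin k} (hN : 0 < N) (hc : p N = p 0)
    (h : ¬ IsElemCircuit N p) : ∃ a b, a < b ∧ b < N ∧ p a = p b := by
  unfold IsElemCircuit at h
  push_neg at h
  obtain ⟨x, y, hx, hy, hxy, hne⟩ := h hN hc
  rcases Nat.lt_or_ge x y with h' | h'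
  · exact ⟨x, y, h', hy, hxy⟩
  · exact ⟨y, x, by omega, hx, hxy.symm⟩

lemma circAw_le_rho (A : MPMat k) {n : ℕ} {p : ℕ → Fin k} (h0 : 0 < n) (hnk : n ≤ k)
    (hc : p n = p 0) : circAw A n p ≤ mpRho A := by
  have hkpos : 0 < k := lt_of_lt_of_le h0 hnk
  have hmem : (⟨⟨n - 1, by omega⟩, fun t => p t.1⟩ : Σ m : Fin k, Fin (m.1 + 1) → Fin k)
      ∈ (Finset.univ : Finset (Σ m : Fin k, Fin (m.1 + 1) → Fin k)) := Finset.mem_univ _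
  have hle := Finset.le_sup (f := fun c : Σ m : Fin k, Fin (m.1 + 1) → Fin k =>
    circAw A (c.1.1 + 1) fun l => c.2 ⟨l % (c.1.1 + 1), Nat.mod_lt _ (Nat.succ_pos _)⟩) hmem
  refine le_trans (le_of_eq ?_) hle
  show circAw A n p = circAw A (n - 1 + 1) fun l => p (l % (n - 1 + 1))
  have hn : n - 1 + 1 = n := by omega
  rw [hn]
  unfold circAw pathWeight
  congr 1
  refine Finset.sum_congr rfl fun l hl => ?_
  have hln := Finset.mem_range.mp hl
  show A (p l) (p (l + 1)) = A (p (l % n)) (p ((l + 1) % n))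
  have h1 : l % n = l := Nat.mod_eq_of_lt hln
  by_cases h2 : l + 1 = n
  · rw [h1, h2, Nat.mod_self, ← hc]
  · rw [h1, Nat.mod_eq_of_lt (by omega)]

lemma extract (A : MPMat k) : ∀ (N : ℕ) (p : ℕ → Fin k), 0 < N → p N = p 0 →
    pathWeight A N p ≠ ⊥ →
    ∃ (m : ℕ) (q : ℕ → Fin k), IsElemCircuit m q ∧ pathWeight A m q ≠ ⊥ ∧
      circAw A N p ≤ circAw A m q ∧
      (∀ t < m, ∃ s < N, q t = p s ∧ q (t + 1) = p (s + 1)) := by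
  intro N
  induction N using Nat.strong_induction_on with
  | _ N IH =>
    intro p hN hc hfin
    by_cases he : IsElemCircuit N p
    · exact ⟨N, p, he, hfin, le_rfl, fun t ht => ⟨t, ht, rfl, rfl⟩⟩
    · obtain ⟨a, b, hab, hbN, hpab⟩ := not_elem hN hc he
      have hbN' : b ≤ N := le_of_lt hbN
      have hne : ¬(a = 0 ∧ b = N) := fun h => absurd h.2 (by omega)
      set n1 := b - a with hn1
      set n2 := N - (b - a) with hn2
      have hn1pos : 0 < n1 := by omega
      have hn2pos : 0 < n2 := by omega
      have hn1lt : n1 < N := by omega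
      have hn2lt : n2 < N := by omega
      have hNsum : N = n1 + n2 := by omega
      have hw := cut_weight hab hbN' hpab A
      set p1 : ℕ → Fin k := fun t => p (a + t) with hp1
      set q : ℕ → Fin k := cutQ p a (b - a) with hq
      have hc1 : p1 n1 = p1 0 := by
        show p (a + n1) = p (a + 0)
        have : a + n1 = b := by omega
        rw [this, Nat.add_zero, hpab]
      have hc2 : q n2 = q 0 := by
        show cutQ p a (b - a) (N - (b - a)) = cutQ p a (b - a) 0
        rw [cut_qN hab hbN' hpab, cut_q0, hc]
      rw [hw] at hfin
      have hfin1 : pathWeight A n1 p1 ≠ ⊥ := fun h => hfin (by rw [h, WithBot.bot_add])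
      have hfin2 : pathWeight A n2 q ≠ ⊥ := fun h => hfin (by rw [h, WithBot.add_bot])
      obtain ⟨w1, hw1⟩ := coe_exists hfin1
      obtain ⟨w2, hw2⟩ := coe_exists hfin2
      have hawfull : circAw A N p = (((w1 + w2) / N : ℝ) : Rmax) := by
        unfold circAw
        rw [hw, hw1, hw2, ← WithBot.coe_add, WithBot.map_coe]
      have haw1 : circAw A n1 p1 = ((w1 / n1 : ℝ) : Rmax) := by
        unfold circAw; rw [hw1, WithBot.map_coe]
      have haw2 : circAw A n2 q = ((w2 / n2 : ℝ) : Rmax) := by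
        unfold circAw; rw [hw2, WithBot.map_coe]
      have hrn1 : (0 : ℝ) < n1 := by exact_mod_cast hn1pos
      have hrn2 : (0 : ℝ) < n2 := by exact_mod_cast hn2pos
      have hrN : (0 : ℝ) < N := by exact_mod_cast hN
      have e3 : (N : ℝ) = n1 + n2 := by rw [hNsum]; push_cast; ring
      rcases le_total (w1 / n1) (w2 / n2) with hle | hle
      · have hkey : (w1 + w2) / N ≤ w2 / n2 := by
          have hle' : w1 * n2 ≤ w2 * n1 := by rwa [div_le_div_iff₀ hrn1 hrn2] at hle
          rw [div_le_div_iff₀ hrN hrn2, e3]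
          nlinarith
        obtain ⟨m, q', hq'e, hq'f, hq'aw, hq'arc⟩ := IH n2 hn2lt q hn2pos hc2 hfin2
        refine ⟨m, q', hq'e, hq'f, ?_, ?_⟩
        · calc circAw A N p = (((w1 + w2) / N : ℝ) : Rmax) := hawfull
            _ ≤ ((w2 / n2 : ℝ) : Rmax) := WithBot.coe_le_coe.mpr hkey
            _ = circAw A n2 q := haw2.symm
            _ ≤ circAw A m q' := hq'aw
        · intro t ht
          obtain ⟨s, hs, e1, e2⟩ := hq'arc t ht
          obtain ⟨s', hs', f1, f2⟩ := cut_arcs hab hbN' hpab s hs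
          exact ⟨s', hs', e1.trans f1, e2.trans f2⟩
      · have hkey : (w1 + w2) / N ≤ w1 / n1 := by
          have hle' : w2 * n1 ≤ w1 * n2 := by rwa [div_le_div_iff₀ hrn2 hrn1] at hle
          rw [div_le_div_iff₀ hrN hrn1, e3]
          nlinarith
        obtain ⟨m, q', hq'e, hq'f, hq'aw, hq'arc⟩ := IH n1 hn1lt p1 hn1pos hc1 hfin1
        refine ⟨m, q', hq'e, hq'f, ?_, ?_⟩
        · calc circAw A N p = (((w1 + w2) / N : ℝ) : Rmax) := hawfull
            _ ≤ ((w1 / n1 : ℝ) : Rmax) := WithBot.coe_le_coe.mpr hkey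
            _ = circAw A n1 p1 := haw1.symm
            _ ≤ circAw A m q' := hq'aw
        · intro t ht
          obtain ⟨s, hs, e1, e2⟩ := hq'arc t ht
          refine ⟨a + s, by omega, e1, ?_⟩
          have : a + s + 1 = a + (s + 1) := by omega
          rw [this] at *
          exact e2
      
lemma weight_le (A : MPMat k) (r : ℝ) (hr : mpRho A = (r : Rmax)) :
    ∀ (N : ℕ) (p : ℕ → Fin k), 0 < N → p N = p 0 →
      pathWeight A N p ≤ ((N * r : ℝ) : Rmax) := by
  intro N
  induction N using Nat.strong_induction_on with
  | _ N IH =>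
    intro p hN hc
    by_cases he : IsElemCircuit N p
    · have hNk : N ≤ k := elem_le_k he.2.2
      have hle : circAw A N p ≤ mpRho A := circAw_le_rho A hN hNk hc
      rcases eq_or_ne (pathWeight A N p) ⊥ with hb | hb
      · rw [hb]; exact bot_le
      · obtain ⟨w, hw⟩ := coe_exists hb
        rw [hw]
        have : circAw A N p = ((w / N : ℝ) : Rmax) := by
          unfold circAw; rw [hw, WithBot.map_coe]
        rw [this, hr, WithBot.coe_le_coe] at hle
        have hrN : (0 : ℝ) < N := by exact_mod_cast hN
        exact WithBot.coe_le_coe.mpr (by rw [div_le_iff₀ hrN] at hle; linarith)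
    · obtain ⟨a, b, hab, hbN, hpab⟩ := not_elem hN hc he
      have hbN' : b ≤ N := le_of_lt hbN
      set n1 := b - a with hn1
      set n2 := N - (b - a) with hn2
      have hn1pos : 0 < n1 := by omega
      have hn2pos : 0 < n2 := by omega
      have hw := cut_weight hab hbN' hpab A
      set p1 : ℕ → Fin k := fun t => p (a + t) with hp1
      set q : ℕ → Fin k := cutQ p a (b - a) with hq
      have hc1 : p1 n1 = p1 0 := by
        show p (a + n1) = p (a + 0)
        have : a + n1 = b := by omega
        rw [this, Nat.add_zero, hpab]
      have hc2 : q n2 = q 0 := by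
        show cutQ p a (b - a) (N - (b - a)) = cutQ p a (b - a) 0
        rw [cut_qN hab hbN' hpab, cut_q0, hc]
      have h1 := IH n1 (by omega) p1 hn1pos hc1
      have h2 := IH n2 (by omega) q hn2pos hc2
      rw [hw]
      calc pathWeight A n1 p1 + pathWeight A n2 q
          ≤ ((n1 * r : ℝ) : Rmax) + ((n2 * r : ℝ) : Rmax) := add_le_add h1 h2
        _ = ((N * r : ℝ) : Rmax) := by
            rw [← WithBot.coe_add, WithBot.coe_inj]
            have : (N : ℝ) = n1 + n2 := by
              have : N = n1 + n2 := by omega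
              rw [this]; push_cast; ring
            rw [this]; ring

open Classical in
lemma sum_pathCoeff_mul (n : ℕ) (p : ℕ → Fin k) (f : Fin k → Fin k → ℝ) :
    ∑ i, ∑ j, pathCoeff n p i j * f i j = ∑ t ∈ range n, f (p t) (p (t + 1)) := by
  classical
  have step1 : ∀ i j : Fin k, pathCoeff n p i j * f i j
      = ∑ t ∈ (range n).filter (fun t => (p t, p (t + 1)) = (i, j)), f (p t) (p (t + 1)) := by
    intro i j
    have hpred : ((range n).filter fun t => p t = i ∧ p (t + 1) = j)
        = (range n).filter (fun t => (p t, p (t + 1)) = (i, j)) := by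
      apply Finset.filter_congr
      intro t _
      simp [Prod.ext_iff]
    have hconst : ∑ t ∈ (range n).filter (fun t => (p t, p (t + 1)) = (i, j)), f (p t) (p (t + 1))
        = ∑ _t ∈ (range n).filter (fun t => (p t, p (t + 1)) = (i, j)), f i j := by
      apply Finset.sum_congr rfl
      intro t ht
      have := (Finset.mem_filter.mp ht).2
      simp only [Prod.mk.injEq] at this
      rw [this.1, this.2]
    rw [hconst, Finset.sum_const, nsmul_eq_mul]
    unfold pathCoeff
    rw [hpred]
  calc ∑ i, ∑ j, pathCoeff n p i j * f i j
      = ∑ y : Fin k × Fin k,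
          ∑ t ∈ (range n).filter (fun t => (p t, p (t + 1)) = y), f (p t) (p (t + 1)) := by
        rw [Fintype.sum_prod_type]
        exact Finset.sum_congr rfl fun i _ => Finset.sum_congr rfl fun j _ => step1 i j
    _ = ∑ t ∈ range n, f (p t) (p (t + 1)) :=
        Finset.sum_fiberwise_of_maps_to (fun x _ => Finset.mem_univ _) _

lemma pathCoeff_eq_zero {A : MPMat k} {n : ℕ} {p : ℕ → Fin k} {i j : Fin k}
    (hf : ArcsOK A n p) (hbot : A i j = ⊥) : pathCoeff n p i j = 0 := by
  classical
  unfold pathCoeff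
  norm_cast
  rw [Finset.card_eq_zero, Finset.filter_eq_empty_iff]
  rintro t ht ⟨e1, e2⟩
  exact hf t (Finset.mem_range.mp ht) (by rw [e1, e2, hbot])

lemma evalForm_circ (A : MPMat k) {n n' : ℕ} {p p' : ℕ → Fin k}
    (hf : ArcsOK A n p) (hf' : ArcsOK A n' p') :
    evalForm (fun i j => circCoeff n p i j - circCoeff n' p' i j) A
      = ((pwR A n p / n - pwR A n' p' / n' : ℝ) : Rmax) := by
  classical
  unfold evalForm
  have hcond : ∀ i j, (fun i j => circCoeff n p i j - circCoeff n' p' i j) i j ≠ 0 →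
      A i j ≠ ⊥ := by
    intro i j hα hbot
    apply hα
    show circCoeff n p i j - circCoeff n' p' i j = 0
    unfold circCoeff
    rw [pathCoeff_eq_zero hf hbot, pathCoeff_eq_zero hf' hbot]
    simp
  rw [if_pos hcond]
  · rw [WithBot.coe_inj]
    have hstep : ∀ i j : Fin k,
        (if (circCoeff n p i j - circCoeff n' p' i j) = 0 then (0 : ℝ)
          else (circCoeff n p i j - circCoeff n' p' i j) * WithBot.unbotD 0 (A i j))
        = circCoeff n p i j * WithBot.unbotD 0 (A i j) - circCoeff n' p' i j * WithBot.unbotD 0 (A i j) := by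
      intro i j
      split_ifs with h
      · have : circCoeff n p i j = circCoeff n' p' i j := by linarith
        rw [this]; ring
      · ring
    rw [Finset.sum_congr rfl fun i _ => Finset.sum_congr rfl fun j _ => hstep i j]
    have hsplit : ∑ i, ∑ j, (circCoeff n p i j * WithBot.unbotD 0 (A i j)
        - circCoeff n' p' i j * WithBot.unbotD 0 (A i j))
        = ∑ i, ∑ j, circCoeff n p i j * WithBot.unbotD 0 (A i j)
          - ∑ i, ∑ j, circCoeff n' p' i j * WithBot.unbotD 0 (A i j) := by
      rw [← Finset.sum_sub_distrib]
      exact Finset.sum_congr rfl fun i _ => Finset.sum_sub_distrib _ _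
    rw [hsplit]
    have hcc : ∀ (m : ℕ) (q : ℕ → Fin k),
        ∑ i, ∑ j, circCoeff m q i j * WithBot.unbotD 0 (A i j) = pwR A m q / m := by
      intro m q
      have : ∀ i j : Fin k, circCoeff m q i j * WithBot.unbotD 0 (A i j)
          = pathCoeff m q i j * (WithBot.unbotD 0 (A i j) / m) := by
        intro i j
        unfold circCoeff
        ring
      rw [Finset.sum_congr rfl fun i _ => Finset.sum_congr rfl fun j _ => this i j,
        sum_pathCoeff_mul m q (fun i j => WithBot.unbotD 0 (A i j) / m)]
      unfold pwR
      rw [Finset.sum_div]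
    rw [hcc, hcc]

lemma rigid (A : MPMat k) (r : ℝ) (hr : mpRho A = (r : Rmax)) (h1 : NoE1Vanishes A)
    {n₀ : ℕ} {p₀ : ℕ → Fin k} (he₀ : IsElemCircuit n₀ p₀)
    (hf₀ : ArcsOK A n₀ p₀) (hw₀ : pwR A n₀ p₀ = n₀ * r) :
    ∀ (N : ℕ) (p : ℕ → Fin k), 0 < N → p N = p 0 →
      pathWeight A N p = ((N * r : ℝ) : Rmax) →
      ∀ t < N, ∃ s < n₀, p₀ s = p t ∧ p₀ (s + 1) = p (t + 1) := by
  intro N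
  induction N using Nat.strong_induction_on with
  | _ N IH =>
    intro p hN hc hpw
    by_cases he : IsElemCircuit N p
    · have hfin : pathWeight A N p ≠ ⊥ := by rw [hpw]; exact WithBot.coe_ne_bot
      have harcs := arcsOK_of_ne_bot hfin
      have hpwr : pwR A N p = N * r := by
        rw [pathWeight_coe harcs, WithBot.coe_inj] at hpw
        exact hpw
      have hset : circArcSet N p = circArcSet n₀ p₀ := by
        by_contra hne
        apply h1 N n₀ p p₀ he he₀ hne
        rw [evalForm_circ A harcs hf₀, hpwr, hw₀]
        have hN0 : (N : ℝ) ≠ 0 := by positivity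
        have hn₀0 : (n₀ : ℝ) ≠ 0 := by
          have := he₀.1
          positivity
        have hz : (N : ℝ) * r / N - n₀ * r / n₀ = 0 := by field_simp; ring
        rw [hz, WithBot.coe_zero]
      intro t ht
      have hmem : (p t, p (t + 1)) ∈ circArcSet N p := ⟨t, ht, rfl, rfl⟩
      rw [hset] at hmem
      obtain ⟨s, hs, e1, e2⟩ := hmem
      exact ⟨s, hs, e1, e2⟩
    · obtain ⟨a, b, hab, hbN, hpab⟩ := not_elem hN hc he
      have hbN' : b ≤ N := le_of_lt hbN
      have hn1pos : 0 < b - a := by omega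
      have hn2pos : 0 < N - (b - a) := by omega
      have hw := cut_weight hab hbN' hpab A
      have hc1 : (fun t => p (a + t)) (b - a) = (fun t => p (a + t)) 0 := by
        show p (a + (b - a)) = p (a + 0)
        have e : a + (b - a) = b := by omega
        rw [e, Nat.add_zero, hpab]
      have hc2 : cutQ p a (b - a) (N - (b - a)) = cutQ p a (b - a) 0 := by
        rw [cut_qN hab hbN' hpab, cut_q0, hc]
      rw [hw] at hpw
      have hfin1 : pathWeight A (b - a) (fun t => p (a + t)) ≠ ⊥ := by
        intro h
        rw [h, WithBot.bot_add] at hpw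
        exact WithBot.coe_ne_bot hpw.symm
      have hfin2 : pathWeight A (N - (b - a)) (cutQ p a (b - a)) ≠ ⊥ := by
        intro h
        rw [h, WithBot.add_bot] at hpw
        exact WithBot.coe_ne_bot hpw.symm
      obtain ⟨w1, hw1⟩ := coe_exists hfin1
      obtain ⟨w2, hw2⟩ := coe_exists hfin2
      have hsum : w1 + w2 = N * r := by
        rw [hw1, hw2, ← WithBot.coe_add, WithBot.coe_inj] at hpw
        exact hpw
      have hle1 : w1 ≤ ((b - a : ℕ) : ℝ) * r := by
        have := weight_le A r hr (b - a) (fun t => p (a + t)) hn1pos hc1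
        rw [hw1, WithBot.coe_le_coe] at this
        exact this
      have hle2 : w2 ≤ (N - (b - a) : ℕ) * r := by
        have := weight_le A r hr (N - (b - a)) (cutQ p a (b - a)) hn2pos hc2
        rw [hw2, WithBot.coe_le_coe] at this
        exact this
      have hNcast : (N : ℝ) = ((b - a : ℕ) : ℝ) + ((N - (b - a) : ℕ) : ℝ) := by
        have h1 : (b - a) + (N - (b - a)) = N := by omega
        calc (N : ℝ) = (((b - a) + (N - (b - a)) : ℕ) : ℝ) := by rw [h1]
          _ = _ := by push_cast; ring
      have hNr : (N : ℝ) * r = ((b - a : ℕ) : ℝ) * r + ((N - (b - a) : ℕ) : ℝ) * r := by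
        rw [hNcast]; ring
      have heq1 : w1 = ((b - a : ℕ) : ℝ) * r := by linarith [hle1, hle2, hsum, hNr]
      have heq2 : w2 = ((N - (b - a) : ℕ) : ℝ) * r := by linarith [hle1, hle2, hsum, hNr]
      have ih1 := IH (b - a) (by omega) (fun t => p (a + t)) hn1pos hc1
        (by rw [hw1, heq1])
      have ih2 := IH (N - (b - a)) (by omega) (cutQ p a (b - a)) hn2pos hc2
        (by rw [hw2, heq2])
      intro t ht
      rcases cut_cover hab hbN' hpab t ht with ⟨s, hs, e1, e2⟩ | ⟨s, hs, e1, e2⟩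
      · obtain ⟨s₀, hs₀, f1, f2⟩ := ih1 s hs
        refine ⟨s₀, hs₀, ?_, ?_⟩
        · rw [f1]
          exact e1
        · rw [f2]
          show p (a + (s + 1)) = p (t + 1)
          have e : a + (s + 1) = a + s + 1 := by omega
          rw [e]
          exact e2
      · obtain ⟨s₀, hs₀, f1, f2⟩ := ih2 s hs
        exact ⟨s₀, hs₀, f1.trans e1, f2.trans e2⟩

lemma circAw_ne_bot_iff {A : MPMat k} {n : ℕ} {p : ℕ → Fin k} :
    circAw A n p = ⊥ ↔ pathWeight A n p = ⊥ := by
  unfold circAw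
  rcases eq_or_ne (pathWeight A n p) ⊥ with h | h
  · simp [h]
  · obtain ⟨w, hw⟩ := coe_exists h
    rw [hw, WithBot.map_coe]
    simp

lemma core (hk : 0 < k) (A : MPMat k) (hA : MemPk A) (h1 : NoE1Vanishes A) :
    ∃ (r : ℝ) (n₀ : ℕ) (p₀ : ℕ → Fin k),
      mpRho A = (r : Rmax) ∧ IsElemCircuit n₀ p₀ ∧ ArcsOK A n₀ p₀ ∧
      pwR A n₀ p₀ = n₀ * r ∧
      (∀ i j, IsCritArc A i j ↔ ∃ l < n₀, p₀ l = i ∧ p₀ (l + 1) = j) := by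
  obtain ⟨hMk, n, hn, hfin⟩ := hA
  obtain ⟨p, hp0, hpn, hpa⟩ := mpPow_path (hfin ⟨0, hk⟩ ⟨0, hk⟩)
  have hcirc : p n = p 0 := by rw [hpn, hp0]
  have hpw : pathWeight A n p ≠ ⊥ := fun h => by
    obtain ⟨l, hl, hb⟩ := pathWeight_eq_bot_iff.mp h
    exact hpa l hl hb
  obtain ⟨m1, q1, he1, hf1, haw1, -⟩ := extract A n p hn hcirc hpw
  have haw1' : circAw A m1 q1 ≤ mpRho A :=
    circAw_le_rho A he1.1 (elem_le_k he1.2.2) he1.2.1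
  have hq1fin : circAw A m1 q1 ≠ ⊥ := fun h => hf1 (circAw_ne_bot_iff.mp h)
  have hρne : mpRho A ≠ ⊥ := fun h => hq1fin (le_bot_iff.mp (h ▸ haw1'))
  obtain ⟨r, hr⟩ := coe_exists hρne
  -- the sup is achieved
  have hne : (Finset.univ : Finset (Σ m : Fin k, Fin (m.1 + 1) → Fin k)).Nonempty :=
    ⟨⟨⟨0, hk⟩, fun _ => ⟨0, hk⟩⟩, Finset.mem_univ _⟩
  obtain ⟨c, -, hcs⟩ := Finset.exists_mem_eq_sup Finset.univ hne
    (fun c : Σ m : Fin k, Fin (m.1 + 1) → Fin k =>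
      circAw A (c.1.1 + 1) fun l => c.2 ⟨l % (c.1.1 + 1), Nat.mod_lt _ (Nat.succ_pos _)⟩)
  have hcs' : mpRho A
      = circAw A (c.1.1 + 1) fun l => c.2 ⟨l % (c.1.1 + 1), Nat.mod_lt _ (Nat.succ_pos _)⟩ := hcs
  have hcC : (fun l => c.2 ⟨l % (c.1.1 + 1), Nat.mod_lt _ (Nat.succ_pos _)⟩) (c.1.1 + 1)
      = (fun l => c.2 ⟨l % (c.1.1 + 1), Nat.mod_lt _ (Nat.succ_pos _)⟩) 0 := by
    show c.2 _ = c.2 _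
    congr 1
    apply Fin.ext
    simp [Nat.mod_self]
  have hpcfin : pathWeight A (c.1.1 + 1)
      (fun l => c.2 ⟨l % (c.1.1 + 1), Nat.mod_lt _ (Nat.succ_pos _)⟩) ≠ ⊥ := by
    intro h
    have : circAw A (c.1.1 + 1)
        (fun l => c.2 ⟨l % (c.1.1 + 1), Nat.mod_lt _ (Nat.succ_pos _)⟩) = ⊥ :=
      circAw_ne_bot_iff.mpr h
    rw [← hcs', hr] at this
    exact WithBot.coe_ne_bot this
  obtain ⟨n₀, p₀, he₀, hf₀', hawge, -⟩ :=
    extract A (c.1.1 + 1) _ (Nat.succ_pos _) hcC hpcfin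
  have hfa₀ : ArcsOK A n₀ p₀ := arcsOK_of_ne_bot hf₀'
  have haw₀ : circAw A n₀ p₀ = ((r : ℝ) : Rmax) := by
    apply le_antisymm
    · rw [← hr]
      exact circAw_le_rho A he₀.1 (elem_le_k he₀.2.2) he₀.2.1
    · rw [← hr, hcs']
      exact hawge
  have hn₀ : (0 : ℝ) < n₀ := by exact_mod_cast he₀.1
  have hw₀ : pwR A n₀ p₀ = n₀ * r := by
    have := circAw_coe hfa₀
    rw [haw₀, WithBot.coe_inj] at this
    field_simp at this
    linarith [this]
  refine ⟨r, n₀, p₀, hr, he₀, hfa₀, hw₀, ?_⟩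
  intro i j
  constructor
  · rintro ⟨N, q, hN, hqc, hqfin, hqaw, l, hl, e1, e2⟩
    obtain ⟨w, hw⟩ := coe_exists hqfin
    have hqaw' : w = N * r := by
      unfold circAw at hqaw
      rw [hw, WithBot.map_coe, hr, WithBot.coe_inj] at hqaw
      have hNpos : (0 : ℝ) < N := by exact_mod_cast hN
      field_simp at hqaw
      linarith [hqaw]
    obtain ⟨s, hs, f1, f2⟩ := rigid A r hr h1 he₀ hfa₀ hw₀ N q hN hqc
      (by rw [hw, hqaw']) l hl
    exact ⟨s, hs, f1.trans e1, f2.trans e2⟩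
  · rintro ⟨l, hl, e1, e2⟩
    exact ⟨n₀, p₀, he₀.1, he₀.2.1, (by rw [pathWeight_coe hfa₀]; exact WithBot.coe_ne_bot),
      (by rw [haw₀, hr]), l, hl, e1, e2⟩

lemma sup_add_coe {ι : Type*} [Fintype ι] [Nonempty ι] (f : ι → Rmax) (e : ℝ) :
    (Finset.univ.sup fun c => f c + (e : Rmax)) = Finset.univ.sup f + (e : Rmax) := by
  apply le_antisymm
  · exact Finset.sup_le fun c _ =>
      add_le_add (Finset.le_sup (Finset.mem_univ c)) le_rfl
  · obtain ⟨c₀, -, h⟩ := Finset.exists_mem_eq_sup Finset.univ Finset.univ_nonempty f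
    rw [h]
    exact Finset.le_sup (f := fun c => f c + (e : Rmax)) (Finset.mem_univ c₀)

section Bar

variable {A : MPMat k}

lemma bar_transfer (hk : 0 < k) (r : ℝ) (hr : mpRho A = (r : Rmax))
    (hκ : ∀ d : Fin k, kappa A d = kappa A ⟨0, hk⟩)
    (hu : ∀ i : Fin k, mpPlus (tildeM A) i (kappa A ⟨0, hk⟩) ≠ ⊥) :
    ∀ i j : Fin k, barM A i j = A i j +
      ((-r - WithBot.unbotD 0 (mpPlus (tildeM A) i (kappa A ⟨0, hk⟩))
        + WithBot.unbotD 0 (mpPlus (tildeM A) j (kappa A ⟨0, hk⟩)) : ℝ) : Rmax) := by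
  intro i j
  obtain ⟨ui, hui⟩ := coe_exists (hu i)
  obtain ⟨uj, huj⟩ := coe_exists (hu j)
  have hstart : barM A i j = tildeM A i j + negB ((ui : ℝ) : Rmax) + ((uj : ℝ) : Rmax) := by
    unfold barM
    rw [hκ i, hui, huj]
  have ht : tildeM A i j = A i j + ((-r : ℝ) : Rmax) := by
    unfold tildeM negB
    rw [hr, WithBot.map_coe]
  have hnu : negB ((ui : ℝ) : Rmax) = ((-ui : ℝ) : Rmax) := by
    unfold negB
    rw [WithBot.map_coe]
  rw [hstart, ht, hnu, hui, huj, WithBot.unbotD_coe, WithBot.unbotD_coe,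
    add_assoc, add_assoc, ← WithBot.coe_add, ← WithBot.coe_add]
  congr 1
  ring

lemma pw_bar (hk : 0 < k) (r : ℝ) (hr : mpRho A = (r : Rmax))
    (hκ : ∀ d : Fin k, kappa A d = kappa A ⟨0, hk⟩)
    (hu : ∀ i : Fin k, mpPlus (tildeM A) i (kappa A ⟨0, hk⟩) ≠ ⊥)
    (N : ℕ) (p : ℕ → Fin k) (hc : p N = p 0) :
    pathWeight (barM A) N p = pathWeight A N p + ((N * (-r) : ℝ) : Rmax) := by
  set u : Fin k → ℝ := fun i => WithBot.unbotD 0 (mpPlus (tildeM A) i (kappa A ⟨0, hk⟩)) with hudef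
  have hb := bar_transfer hk r hr hκ hu
  unfold pathWeight
  calc ∑ t ∈ range N, barM A (p t) (p (t + 1))
      = ∑ t ∈ range N, (A (p t) (p (t + 1))
          + ((-r - u (p t) + u (p (t + 1)) : ℝ) : Rmax)) :=
        Finset.sum_congr rfl fun t _ => hb (p t) (p (t + 1))
    _ = (∑ t ∈ range N, A (p t) (p (t + 1)))
          + ((∑ t ∈ range N, (-r - u (p t) + u (p (t + 1))) : ℝ) : Rmax) :=
        sum_add_coe _ _ _
    _ = (∑ t ∈ range N, A (p t) (p (t + 1))) + ((N * (-r) : ℝ) : Rmax) := by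
        congr 1
        rw [WithBot.coe_inj]
        have : ∀ t : ℕ, -r - u (p t) + u (p (t + 1))
            = -r + (u (p (t + 1)) - u (p t)) := fun t => by ring
        rw [Finset.sum_congr rfl fun t _ => this t, Finset.sum_add_distrib,
          Finset.sum_range_sub (fun t => u (p t)), hc]
        rw [Finset.sum_const, Finset.card_range, nsmul_eq_mul]
        ring

lemma circAw_bar (hk : 0 < k) (r : ℝ) (hr : mpRho A = (r : Rmax))
    (hκ : ∀ d : Fin k, kappa A d = kappa A ⟨0, hk⟩)
    (hu : ∀ i : Fin k, mpPlus (tildeM A) i (kappa A ⟨0, hk⟩) ≠ ⊥)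
    (N : ℕ) (p : ℕ → Fin k) (hN : 0 < N) (hc : p N = p 0) :
    circAw (barM A) N p = circAw A N p + ((-r : ℝ) : Rmax) := by
  unfold circAw
  rw [pw_bar hk r hr hκ hu N p hc]
  rcases eq_or_ne (pathWeight A N p) ⊥ with h | h
  · simp [h]
  · obtain ⟨w, hw⟩ := coe_exists h
    rw [hw, ← WithBot.coe_add, WithBot.map_coe, WithBot.map_coe, ← WithBot.coe_add,
      WithBot.coe_inj]
    have hNr : (0 : ℝ) < N := by exact_mod_cast hN
    field_simp

lemma rho_bar (hk : 0 < k) (r : ℝ) (hr : mpRho A = (r : Rmax))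
    (hκ : ∀ d : Fin k, kappa A d = kappa A ⟨0, hk⟩)
    (hu : ∀ i : Fin k, mpPlus (tildeM A) i (kappa A ⟨0, hk⟩) ≠ ⊥) :
    mpRho (barM A) = mpRho A + ((-r : ℝ) : Rmax) := by
  have : ∀ c : Σ m : Fin k, Fin (m.1 + 1) → Fin k,
      (circAw (barM A) (c.1.1 + 1) fun l => c.2 ⟨l % (c.1.1 + 1), Nat.mod_lt _ (Nat.succ_pos _)⟩)
      = (circAw A (c.1.1 + 1) fun l => c.2 ⟨l % (c.1.1 + 1), Nat.mod_lt _ (Nat.succ_pos _)⟩)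
        + ((-r : ℝ) : Rmax) := by
    intro c
    apply circAw_bar hk r hr hκ hu _ _ (Nat.succ_pos _)
    show c.2 _ = c.2 _
    congr 1
    apply Fin.ext
    simp [Nat.mod_self]
  have hinst : Nonempty (Σ m : Fin k, Fin (m.1 + 1) → Fin k) :=
    ⟨⟨⟨0, hk⟩, fun _ => ⟨0, hk⟩⟩⟩
  calc mpRho (barM A)
      = Finset.univ.sup (fun c : Σ m : Fin k, Fin (m.1 + 1) → Fin k =>
          (circAw A (c.1.1 + 1) fun l => c.2 ⟨l % (c.1.1 + 1), Nat.mod_lt _ (Nat.succ_pos _)⟩)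
            + ((-r : ℝ) : Rmax)) := Finset.sup_congr rfl fun c _ => this c
    _ = mpRho A + ((-r : ℝ) : Rmax) := sup_add_coe _ _

lemma critArc_bar (hk : 0 < k) (r : ℝ) (hr : mpRho A = (r : Rmax))
    (hκ : ∀ d : Fin k, kappa A d = kappa A ⟨0, hk⟩)
    (hu : ∀ i : Fin k, mpPlus (tildeM A) i (kappa A ⟨0, hk⟩) ≠ ⊥) :
    ∀ i j : Fin k, IsCritArc (barM A) i j ↔ IsCritArc A i j := by
  intro i j
  unfold IsCritArc
  constructor
  · rintro ⟨N, p, hN, hc, hfin, haw, l, hl, e1, e2⟩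
    refine ⟨N, p, hN, hc, ?_, ?_, l, hl, e1, e2⟩
    · rw [pw_bar hk r hr hκ hu N p hc] at hfin
      exact fun h => hfin (by rw [h, WithBot.bot_add])
    · have h1 := circAw_bar hk r hr hκ hu N p hN hc
      have h2 := rho_bar hk r hr hκ hu
      rw [h1, h2] at haw
      exact add_coe_cancel haw
  · rintro ⟨N, p, hN, hc, hfin, haw, l, hl, e1, e2⟩
    refine ⟨N, p, hN, hc, ?_, ?_, l, hl, e1, e2⟩
    · rw [pw_bar hk r hr hκ hu N p hc]
      exact fun h => hfin (add_coe_ne_bot.mp h)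
    · rw [circAw_bar hk r hr hκ hu N p hN hc, rho_bar hk r hr hκ hu, haw]

end Bar
end Stmt14

/-- if no linear form of `E₁` vanishes at `A ∈ P_k`, then the critical
graph `G^c(A)` is an elementary circuit; in particular it is strongly connected, and
the critical graph of the reduced matrix `Ā` is strongly connected. -/
theorem stmt14 (k : ℕ) (hk : 0 < k) (A : MPMat k) (hA : MaxPlus.MemPk A)
    (h1 : MaxPlus.NoE1Vanishes A) :
    (∃ (n : ℕ) (p : ℕ → Fin k), MaxPlus.IsElemCircuit n p ∧
      (∀ i, MaxPlus.IsCritNode A i ↔ ∃ l < n, p l = i) ∧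
      (∀ i j, MaxPlus.IsCritArc A i j ↔ ∃ l < n, p l = i ∧ p (l + 1) = j)) ∧
    MaxPlus.CritSCS1 A ∧ MaxPlus.CritSCS1 (MaxPlus.barM A) := by
  classical
  open MaxPlus Stmt14 in
  obtain ⟨r, n₀, p₀, hr, he₀, hf₀, hw₀, harc⟩ := Stmt14.core hk A hA h1
  have hn₀pos : 0 < n₀ := he₀.1
  -- nodes of the critical graph
  have hnode : ∀ i, MaxPlus.IsCritNode A i ↔ ∃ l < n₀, p₀ l = i := by
    intro i
    constructor
    · rintro ⟨j, hj⟩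
      obtain ⟨l, hl, e1, e2⟩ := (harc i j).mp hj
      exact ⟨l, hl, e1⟩
    · rintro ⟨l, hl, e1⟩
      exact ⟨p₀ (l + 1), (harc _ _).mpr ⟨l, hl, e1, rfl⟩⟩
  -- periodicity helper
  have hper : ∀ x : ℕ, p₀ ((x + 1) % n₀) = p₀ (x % n₀ + 1) := by
    intro x
    have hs : x % n₀ < n₀ := Nat.mod_lt _ hn₀pos
    have hx : x + 1 = x % n₀ + 1 + n₀ * (x / n₀) := by
      have := Nat.div_add_mod x n₀
      omega
    rw [hx, Nat.add_mul_mod_self_left]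
    rcases Nat.lt_or_ge (x % n₀ + 1) n₀ with h | h
    · rw [Nat.mod_eq_of_lt h]
    · have he : x % n₀ + 1 = n₀ := by omega
      rw [he, Nat.mod_self, ← he₀.2.1]
  -- strong connectivity of the critical graph of A
  have hscs : MaxPlus.CritSCS1 A := by
    constructor
    · exact ⟨p₀ 0, (hnode _).mpr ⟨0, hn₀pos, rfl⟩⟩
    · intro i j hi hj
      obtain ⟨a, ha, e1⟩ := (hnode i).mp hi
      obtain ⟨b, hb, e2⟩ := (hnode j).mp hj
      refine ⟨b + n₀ - a, fun t => p₀ ((a + t) % n₀), ?_, ?_, ?_⟩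
      · show p₀ ((a + 0) % n₀) = i
        rw [Nat.add_zero, Nat.mod_eq_of_lt ha]
        exact e1
      · show p₀ ((a + (b + n₀ - a)) % n₀) = j
        have hx : a + (b + n₀ - a) = b + n₀ := by omega
        rw [hx, Nat.add_mod_right, Nat.mod_eq_of_lt hb]
        exact e2
      · intro l hl
        apply (harc _ _).mpr
        refine ⟨(a + l) % n₀, Nat.mod_lt _ hn₀pos, rfl, ?_⟩
        show p₀ ((a + l) % n₀ + 1) = p₀ ((a + (l + 1)) % n₀)
        have hx : a + (l + 1) = (a + l) + 1 := by omega
        rw [hx, hper (a + l)]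
  refine ⟨⟨n₀, p₀, he₀, hnode, harc⟩, hscs, ?_⟩
  -- the critical graph of the reduced matrix
  have hSne : {m : ℕ | ∃ h : m < k, MaxPlus.IsCritNode A ⟨m, h⟩}.Nonempty := by
    refine ⟨(p₀ 0).1, (p₀ 0).2, ?_⟩
    have : (⟨(p₀ 0).1, (p₀ 0).2⟩ : Fin k) = p₀ 0 := rfl
    rw [this]
    exact (hnode _).mpr ⟨0, hn₀pos, rfl⟩
  obtain ⟨hκlt, -⟩ := Nat.sInf_mem hSne
  have hκlt' : MaxPlus.kappaN A < k := hκlt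
  have hκ : ∀ d : Fin k, MaxPlus.kappa A d = MaxPlus.kappa A ⟨0, hk⟩ := by
    intro d
    unfold MaxPlus.kappa
    rw [dif_pos hκlt', dif_pos hκlt']
  have htM : ∀ x y : Fin k, MaxPlus.tildeM A x y = A x y + ((-r : ℝ) : Rmax) := by
    intro x y
    unfold MaxPlus.tildeM MaxPlus.negB
    rw [hr, WithBot.map_coe]
  -- all entries of (tildeM A)⁺ at column κ are finite
  obtain ⟨hMk, n, hn, hfin⟩ := hA
  have hu : ∀ i : Fin k, MaxPlus.mpPlus (MaxPlus.tildeM A) i (MaxPlus.kappa A ⟨0, hk⟩) ≠ ⊥ := by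
    intro i
    obtain ⟨p, hp0, hpn, hpa⟩ := Stmt14.mpPow_path (hfin i (MaxPlus.kappa A ⟨0, hk⟩))
    obtain ⟨N', q, hN', hq0, hqN, hqarcs, hqinj⟩ := Stmt14.shorten n p hn
    have hN'k : N' ≤ k := Stmt14.elem_le_k hqinj
    have hqok : Stmt14.ArcsOK (MaxPlus.tildeM A) N' q := by
      intro l hl
      obtain ⟨s, hs, f1, f2⟩ := hqarcs l hl
      rw [f1, f2, htM]
      rw [Ne, Stmt14.add_coe_ne_bot]
      exact hpa s hs
    have hpwfin : MaxPlus.pathWeight (MaxPlus.tildeM A) N' q ≠ ⊥ := by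
      intro h
      obtain ⟨l, hl, hb⟩ := Stmt14.pathWeight_eq_bot_iff.mp h
      exact hqok l hl hb
    have hle1 : MaxPlus.pathWeight (MaxPlus.tildeM A) N' q
        ≤ MaxPlus.mpPow (MaxPlus.tildeM A) N' i (MaxPlus.kappa A ⟨0, hk⟩) := by
      have := Stmt14.pathWeight_le_mpPow (MaxPlus.tildeM A) N' q
      rw [hq0, hqN, hp0, hpn] at this
      exact this
    have hle2 : MaxPlus.mpPow (MaxPlus.tildeM A) N' i (MaxPlus.kappa A ⟨0, hk⟩)
        ≤ MaxPlus.mpPlus (MaxPlus.tildeM A) i (MaxPlus.kappa A ⟨0, hk⟩) :=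
      Finset.le_sup (f := fun m => MaxPlus.mpPow (MaxPlus.tildeM A) m i (MaxPlus.kappa A ⟨0, hk⟩))
        (Finset.mem_Icc.mpr ⟨hN', hN'k⟩)
    intro h
    rw [h] at hle2
    exact hpwfin (le_bot_iff.mp (le_trans hle1 hle2))
  have harcBar := Stmt14.critArc_bar hk r hr hκ hu
  constructor
  · obtain ⟨i, hi⟩ := hscs.1
    obtain ⟨j, hj⟩ := hi
    exact ⟨i, j, (harcBar i j).mpr hj⟩
  · intro i j hi hj
    obtain ⟨i', hi'⟩ := hi
    obtain ⟨j', hj'⟩ := hj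
    obtain ⟨N, p, hp0, hpN, hparc⟩ := hscs.2 i j ⟨i', (harcBar i i').mp hi'⟩
      ⟨j', (harcBar j j').mp hj'⟩
    exact ⟨N, p, hp0, hpN, fun l hl => (harcBar _ _).mpr (hparc l hl)⟩
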